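/- If Ỹ ∈ ℝ^{N×M̃} and Q = Ỹ Ỹᵀ satisfies the distance constraints Q_{ii} + Q_{jj} − 2Q_{ij} = ‖Y_{i:} − Y_{j:}‖₂² for all edges (i,j) of a connected graph E on {1,…,N}, and all columns of Ỹ sum to zero, then tr(Q) ≤ (N/2) · (diam_E)², where diam_E is the maximum over i,k of the shortest-path length from i to k in E measured by summing edge lengths ‖Y_{i:} − Y_{j:}‖₂. -/

import Mathlib

open Finset Matrix

/-- Euclidean distance between rows `i` and `j` of the matrix `Y`. -/
noncomputable def rowDist {N M : ℕ} (Y : Matrix (Fin N) (Fin M) ℝ) (i j : Fin N) : ℝ :=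
  Real.sqrt (∑ c, (Y i c - Y j c) ^ 2)

/-- Length of a walk in the graph `G`, measured by summing the row-distance edge lengths. -/
noncomputable def walkLen {N M : ℕ} (Y : Matrix (Fin N) (Fin M) ℝ)
    {G : SimpleGraph (Fin N)} {i k : Fin N} (w : G.Walk i k) : ℝ :=
  (w.darts.map (fun d => rowDist Y d.toProd.1 d.toProd.2)).sum

/-- Shortest-path distance between `i` and `k` in `G`, with edge lengths given by the
row distances of `Y`. -/
noncomputable def spDist {N M : ℕ} (Y : Matrix (Fin N) (Fin M) ℝ)
    (G : SimpleGraph (Fin N)) (i k : Fin N) : ℝ :=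
  sInf {L : ℝ | ∃ w : G.Walk i k, walkLen Y w = L}

/-- Diameter of `G` with edge lengths given by the row distances of `Y`. -/
noncomputable def gDiam {N M : ℕ} (Y : Matrix (Fin N) (Fin M) ℝ)
    (G : SimpleGraph (Fin N)) : ℝ :=
  ⨆ i : Fin N, ⨆ k : Fin N, spDist Y G i k


/-!
Let `xᵢ` be the rows of `Ỹ`, so that `Q` is their Gram matrix and `tr Q = ∑ ‖xᵢ‖²`.
Since the `xᵢ` sum to zero, `∑ᵢ ∑ⱼ ‖xᵢ - xⱼ‖² = 2N · tr Q`. On an edge `‖xᵢ - xⱼ‖` is the edge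
length, so the triangle inequality along a walk bounds every `‖xᵢ - xₖ‖` by the shortest-path
distance, hence by the diameter; summing these `N²` bounds gives `2N · tr Q ≤ N² · diam²`.
-/

namespace Matrix

variable {ι E : Type*} [NormedAddCommGroup E] [InnerProductSpace ℝ E]

theorem norm_sub_sq_eq_gram (v : ι → E) (i j : ι) :
    ‖v i - v j‖ ^ 2 = gram ℝ v i i + gram ℝ v j j - 2 * gram ℝ v i j := by
  simp only [gram_apply, norm_sub_sq_real, real_inner_self_eq_norm_sq]
  ring

theorem trace_gram [Fintype ι] (v : ι → E) : (gram ℝ v).trace = ∑ i, ‖v i‖ ^ 2 := by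
  simp [trace, gram_apply]

theorem sum_sum_norm_sub_sq_eq_of_sum_eq_zero [Fintype ι] (v : ι → E) (hv : ∑ i, v i = 0) :
    ∑ i, ∑ j, ‖v i - v j‖ ^ 2 = 2 * Fintype.card ι * ∑ i, ‖v i‖ ^ 2 := by
  have hinner : ∑ i, ∑ j, inner ℝ (v i) (v j) = 0 := by
    simp [← inner_sum, hv]
  simp only [norm_sub_sq_real, sum_add_distrib, sum_sub_distrib, ← mul_sum, hinner, sum_const,
    card_univ, nsmul_eq_mul]
  ring

theorem trace_gram_le_of_sum_eq_zero [Fintype ι] (v : ι → E) (hv : ∑ i, v i = 0) {D : ℝ}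
    (hD : ∀ i j, ‖v i - v j‖ ≤ D) :
    (gram ℝ v).trace ≤ Fintype.card ι / 2 * D ^ 2 := by
  rw [trace_gram]
  rcases isEmpty_or_nonempty ι with hι | hι
  · simp
  have hn : (0 : ℝ) < Fintype.card ι := by exact_mod_cast Fintype.card_pos
  have hsum : 2 * Fintype.card ι * ∑ i, ‖v i‖ ^ 2 ≤ Fintype.card ι * Fintype.card ι * D ^ 2 := by
    calc 2 * Fintype.card ι * ∑ i, ‖v i‖ ^ 2 = ∑ i, ∑ j, ‖v i - v j‖ ^ 2 :=
          (sum_sum_norm_sub_sq_eq_of_sum_eq_zero v hv).symm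
      _ ≤ ∑ _i : ι, ∑ _j : ι, D ^ 2 := by
          gcongr with i _ j _
          exact hD i j
      _ = Fintype.card ι * Fintype.card ι * D ^ 2 := by
          simp only [sum_const, card_univ, nsmul_eq_mul]
          ring
  rw [div_mul_eq_mul_div, le_div_iff₀ two_pos]
  nlinarith

theorem mul_transpose_self_eq_gram {m n : Type*} [Fintype n] (A : Matrix m n ℝ) :
    A * Aᵀ = gram ℝ (fun i => WithLp.toLp 2 (A i ·) : m → EuclideanSpace ℝ n) := by
  ext i j
  simp [mul_apply, gram_apply, PiLp.inner_apply, mul_comm]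

end Matrix

theorem dist_le_sum_darts_of_adj {V α : Type*} [PseudoMetricSpace α]
    {G : SimpleGraph V} (f : V → α) (ℓ : V → V → ℝ)
    (hℓ : ∀ a b, G.Adj a b → dist (f a) (f b) ≤ ℓ a b) {u v : V} (w : G.Walk u v) :
    dist (f u) (f v) ≤ (w.darts.map fun d => ℓ d.fst d.snd).sum := by
  induction w with
  | nil => simp
  | cons hab w ih =>
    rw [SimpleGraph.Walk.darts_cons, List.map_cons, List.sum_cons]
    exact (dist_triangle _ _ _).trans (add_le_add (hℓ _ _ hab) ih)

section

variable {N M : ℕ} (Y : Matrix (Fin N) (Fin M) ℝ) {G : SimpleGraph (Fin N)}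

theorem dist_le_spDist {α : Type*} [PseudoMetricSpace α] (hG : G.Preconnected) (f : Fin N → α)
    (hf : ∀ a b, G.Adj a b → dist (f a) (f b) ≤ rowDist Y a b) (i k : Fin N) :
    dist (f i) (f k) ≤ spDist Y G i k := by
  obtain ⟨w⟩ := hG i k
  refine le_csInf ⟨_, w, rfl⟩ ?_
  rintro _ ⟨w, rfl⟩
  exact dist_le_sum_darts_of_adj f _ hf w

variable (G) in
theorem spDist_le_gDiam (i k : Fin N) : spDist Y G i k ≤ gDiam Y G :=
  (le_ciSup (Set.finite_range _).bddAbove k).trans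
    (le_ciSup (f := fun i => ⨆ k, spDist Y G i k) (Set.finite_range _).bddAbove i)

end

/-- If `Q = Ỹ Ỹᵀ` satisfies the local distance constraints on the edges of a connected
graph and the columns of `Ỹ` sum to zero, then
`tr(Q) ≤ (N/2) · diam²` where `diam` is the shortest-path diameter of the graph with
edge lengths `‖Yᵢ: − Yⱼ:‖₂`. -/
theorem stmt19 {N M Mt : ℕ} (Y : Matrix (Fin N) (Fin M) ℝ)
    (Yt : Matrix (Fin N) (Fin Mt) ℝ) (G : SimpleGraph (Fin N))
    (hG : G.Connected)
    (Q : Matrix (Fin N) (Fin N) ℝ)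
    (hQ : Q = Yt * Ytᵀ)
    (hdist : ∀ i j : Fin N, G.Adj i j →
      Q i i + Q j j - 2 * Q i j = ∑ c, (Y i c - Y j c) ^ 2)
    (hcent : ∀ m : Fin Mt, ∑ i, Yt i m = 0) :
    Q.trace ≤ ((N : ℝ) / 2) * (gDiam Y G) ^ 2 := by
  rw [Matrix.mul_transpose_self_eq_gram] at hQ
  set x : Fin N → EuclideanSpace ℝ (Fin Mt) := fun i => WithLp.toLp 2 (Yt i ·)
  subst hQ
  have hx : ∑ i, x i = 0 := by
    ext m
    simpa [x] using hcent m
  have hedge : ∀ a b, G.Adj a b → dist (x a) (x b) ≤ rowDist Y a b := by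
    intro a b hab
    rw [rowDist, ← hdist a b hab, ← Matrix.norm_sub_sq_eq_gram, Real.sqrt_sq (norm_nonneg _),
      dist_eq_norm]
  simpa only [Fintype.card_fin] using Matrix.trace_gram_le_of_sum_eq_zero x hx fun i k =>
    (dist_eq_norm (x i) (x k)).symm.trans_le <|
      (dist_le_spDist Y hG.preconnected x hedge i k).trans (spDist_le_gDiam Y G i k)
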